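/- arXiv:1006.4696 — 3 statements merged into one kernel-verified Lean document; each statement's English description precedes it below -/
import Mathlib

section
/- In a unit-demand market with buyers I, goods J, and strictly decreasing continuous utility functions u_i^j, if W and W' are two competitive equilibria with price vectors p, p' and payoff vectors u, u', then the pointwise minimum of prices min(p^j, p'^j) together with the pointwise maximum of payoffs max(u_i, u'_i) forms a competitive equilibrium (with supporting matching assigning each buyer i the good μ(i) if u_i ≥ u'_i and μ'(i) otherwise, where μ, μ' support W, W'). -/
attribute [local instance] Classical.propDecidable

/-- A unit-demand market: finite sets of buyers `I` and goods `J`, with utility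
functions `u i j : ℝ → ℝ` that are continuous, strictly decreasing, surjective
(domain and range cover all of `ℝ`), and eventually non-positive. -/
structure Market (I J : Type) [Fintype I] [Fintype J] where
  u : I → J → ℝ → ℝ
  cont : ∀ i j, Continuous (u i j)
  anti : ∀ i j, StrictAnti (u i j)
  surj : ∀ i j, Function.Surjective (u i j)
  evNonpos : ∀ i j, ∃ x : ℝ, ∀ y ≥ x, u i j y ≤ 0

/-- A competitive equilibrium: nonnegative prices `p`, nonnegative payoffs `w`,
and a partial matching `μ` (injective on matched buyers) such that every buyer
receives a most preferred good at the prices, unmatched buyers have payoff `0`,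
and unmatched goods have price `0`. -/
def IsEquilib {I J : Type} [Fintype I] [Fintype J] (M : Market I J)
    (p : J → ℝ) (w : I → ℝ) (μ : I → Option J) : Prop :=
  (∀ i i' j, μ i = some j → μ i' = some j → i = i') ∧
  (∀ j, 0 ≤ p j) ∧ (∀ i, 0 ≤ w i) ∧
  (∀ i j, μ i = some j → w i = M.u i j (p j)) ∧
  (∀ i j, M.u i j (p j) ≤ w i) ∧
  (∀ i, μ i = none → w i = 0) ∧
  (∀ j, (∀ i, μ i ≠ some j) → p j = 0)

/-- `W` is the lowest competitive equilibrium: its prices are componentwise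
below those of every competitive equilibrium. -/
def IsLowest {I J : Type} [Fintype I] [Fintype J] (M : Market I J)
    (p : J → ℝ) (w : I → ℝ) (μ : I → Option J) : Prop :=
  IsEquilib M p w μ ∧ ∀ p' w' μ', IsEquilib M p' w' μ' → ∀ j, p j ≤ p' j

/-- `W` is the highest competitive equilibrium: its prices are componentwise
above those of every competitive equilibrium. -/
def IsHighest {I J : Type} [Fintype I] [Fintype J] (M : Market I J)
    (p : J → ℝ) (w : I → ℝ) (μ : I → Option J) : Prop :=
  IsEquilib M p w μ ∧ ∀ p' w' μ', IsEquilib M p' w' μ' → ∀ j, p' j ≤ p j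

/-- Induced payoff `u_i(p) = max({u_i^j(p^j) : j} ∪ {0})`. -/
noncomputable def inducedPayoff {I J : Type} [Fintype I] [Fintype J] (M : Market I J)
    (p : J → ℝ) (i : I) : ℝ :=
  (insert (0:ℝ) (Finset.univ.image fun j => M.u i j (p j))).max' (Finset.insert_nonempty _ _)

/-- Induced price `p^j(u) = max({p_i^j(u_i) : i} ∪ {0})`, where `p_i^j` is the
inverse of `u_i^j`. -/
noncomputable def inducedPrice {I J : Type} [Fintype I] [Fintype J] (M : Market I J)
    (w : I → ℝ) (j : J) : ℝ :=
  (insert (0:ℝ) (Finset.univ.image fun i => Function.invFun (M.u i j) (w i))).max' (Finset.insert_nonempty _ _)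

/-!
Let `B` be the buyers strictly better off in `W'` and `S` the goods strictly cheaper in `W'`.
A buyer of `B` is matched under `μ'` (its payoff is positive) to a good of `S`, and a good of
`S` has positive price in `W`, so it is sold under `μ` to a buyer of `B`. Counting, `μ'` maps
`B` onto `S` and `μ` maps `B` into `S`; the remaining buyers keep their `μ`-goods, which are
priced no higher in `W`. Hence in the combined matching nobody else claims a good of `S`, every good
outside `S` with a positive `W`-price stays sold, and each buyer gets a best good at the lower
prices.
-/

open Finset

theorem Finset.image_eq_of_injOn_of_subset_image {α β : Type*} [DecidableEq β] {s : Finset α}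
    {t : Finset β} {f g : α → β} (hf : Set.InjOn f s) (hft : s.image f ⊆ t)
    (htg : t ⊆ s.image g) : s.image f = t ∧ s.image g = t := by
  have hgf : #(s.image g) ≤ #(s.image f) := card_image_of_injOn hf ▸ card_image_le
  exact ⟨eq_of_subset_of_card_le hft ((card_le_card htg).trans hgf),
    (eq_of_subset_of_card_le htg (hgf.trans (card_le_card hft))).symm⟩

namespace IsEquilib

variable {I J : Type} [Fintype I] [Fintype J] {M : Market I J} {p p' : J → ℝ} {w w' : I → ℝ}
  {μ μ' : I → Option J} {i i' : I} {j : J}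

theorem eq_of_matched (h : IsEquilib M p w μ) (hi : μ i = some j) (hi' : μ i' = some j) :
    i = i' :=
  h.1 i i' j hi hi'

theorem price_nonneg (h : IsEquilib M p w μ) (j : J) : 0 ≤ p j := h.2.1 j

theorem payoff_nonneg (h : IsEquilib M p w μ) (i : I) : 0 ≤ w i := h.2.2.1 i

theorem payoff_eq (h : IsEquilib M p w μ) (hi : μ i = some j) : w i = M.u i j (p j) :=
  h.2.2.2.1 i j hi

theorem utility_le_payoff (h : IsEquilib M p w μ) (i : I) (j : J) : M.u i j (p j) ≤ w i :=
  h.2.2.2.2.1 i j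

theorem payoff_eq_zero (h : IsEquilib M p w μ) (hi : μ i = none) : w i = 0 :=
  h.2.2.2.2.2.1 i hi

theorem price_eq_zero (h : IsEquilib M p w μ) (hj : ∀ i, μ i ≠ some j) : p j = 0 :=
  h.2.2.2.2.2.2 j hj

theorem exists_matched_of_payoff_pos (h : IsEquilib M p w μ) (hw : 0 < w i) :
    ∃ j, μ i = some j := by
  cases hi : μ i with
  | none => exact absurd (h.payoff_eq_zero hi) hw.ne'
  | some j => exact ⟨j, rfl⟩

theorem exists_matched_of_price_pos (h : IsEquilib M p w μ) (hp : 0 < p j) :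
    ∃ i, μ i = some j := by
  by_contra! hj
  exact hp.ne' (h.price_eq_zero hj)

theorem price_le_of_payoff_le (h : IsEquilib M p w μ) (h' : IsEquilib M p' w' μ')
    (hi : μ i = some j) (hw : w' i ≤ w i) : p j ≤ p' j :=
  (M.anti i j).le_iff_ge.mp <| (h'.utility_le_payoff i j).trans (hw.trans_eq (h.payoff_eq hi))

theorem price_lt_of_payoff_lt (h : IsEquilib M p w μ) (h' : IsEquilib M p' w' μ')
    (hi : μ i = some j) (hw : w' i < w i) : p j < p' j :=
  (M.anti i j).lt_iff_gt.mp <| (h'.utility_le_payoff i j).trans_lt (hw.trans_eq (h.payoff_eq hi))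

theorem image_filter_payoff_lt (h : IsEquilib M p w μ) (h' : IsEquilib M p' w' μ') :
    (univ.filter fun i => w i < w' i).image μ' = (univ.filter fun j => p' j < p j).image some ∧
    (univ.filter fun i => w i < w' i).image μ = (univ.filter fun j => p' j < p j).image some := by
  have hsold : ∀ i, w i < w' i → ∃ j, p' j < p j ∧ μ' i = some j := fun i hi => by
    obtain ⟨j, hj⟩ := h'.exists_matched_of_payoff_pos ((h.payoff_nonneg i).trans_lt hi)
    exact ⟨j, h'.price_lt_of_payoff_lt h hj hi, hj⟩
  have hbought : ∀ j, p' j < p j → ∃ i, w i < w' i ∧ μ i = some j := fun j hj => by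
    obtain ⟨i, hi⟩ := h.exists_matched_of_price_pos ((h'.price_nonneg j).trans_lt hj)
    refine ⟨i, ?_, hi⟩
    calc w i = M.u i j (p j) := h.payoff_eq hi
      _ < M.u i j (p' j) := M.anti i j hj
      _ ≤ w' i := h'.utility_le_payoff i j
  apply image_eq_of_injOn_of_subset_image
  · intro i hi i₁ _ hii₁
    obtain ⟨j, -, hj⟩ := hsold i (mem_filter.mp hi).2
    exact h'.eq_of_matched hj (hii₁ ▸ hj)
  · simp only [image_subset_iff, mem_filter, mem_univ, true_and, mem_image]
    intro i hi
    obtain ⟨j, hjS, hj⟩ := hsold i hi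
    exact ⟨j, hjS, hj.symm⟩
  · simp only [subset_iff, mem_image, mem_filter, mem_univ, true_and]
    rintro _ ⟨j, hjS, rfl⟩
    exact hbought j hjS

theorem eq_of_matched_meet (h : IsEquilib M p w μ) (h' : IsEquilib M p' w' μ')
    (hi : (if w' i ≤ w i then μ i else μ' i) = some j)
    (hi' : (if w' i' ≤ w i' then μ i' else μ' i') = some j) : i = i' := by
  rcases ite_eq_iff.mp hi with ⟨hle, hi⟩ | ⟨hlt, hi⟩ <;>
    rcases ite_eq_iff.mp hi' with ⟨hle', hi'⟩ | ⟨hlt', hi'⟩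
  · exact h.eq_of_matched hi hi'
  · exact absurd (h.price_le_of_payoff_le h' hi hle)
      (h'.price_lt_of_payoff_lt h hi' (not_le.mp hlt')).not_ge
  · exact absurd (h.price_le_of_payoff_le h' hi' hle')
      (h'.price_lt_of_payoff_lt h hi (not_le.mp hlt)).not_ge
  · exact h'.eq_of_matched hi hi'

theorem max_payoff_eq_of_matched_meet (h : IsEquilib M p w μ) (h' : IsEquilib M p' w' μ')
    (hi : (if w' i ≤ w i then μ i else μ' i) = some j) :
    max (w i) (w' i) = M.u i j (min (p j) (p' j)) := by
  rcases ite_eq_iff.mp hi with ⟨hle, hi⟩ | ⟨hlt, hi⟩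
  · rw [max_eq_left hle, min_eq_left (h.price_le_of_payoff_le h' hi hle), h.payoff_eq hi]
  · have hlt := not_le.mp hlt
    rw [max_eq_right hlt.le, min_eq_right (h'.price_lt_of_payoff_lt h hi hlt).le, h'.payoff_eq hi]

theorem utility_min_le_max_payoff (h : IsEquilib M p w μ) (h' : IsEquilib M p' w' μ')
    (i : I) (j : J) : M.u i j (min (p j) (p' j)) ≤ max (w i) (w' i) :=
  (M.anti i j).antitone.map_min ▸
    max_le_max (h.utility_le_payoff i j) (h'.utility_le_payoff i j)

theorem max_payoff_eq_zero_of_meet_eq_none (h : IsEquilib M p w μ) (h' : IsEquilib M p' w' μ')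
    (hi : (if w' i ≤ w i then μ i else μ' i) = none) : max (w i) (w' i) = 0 := by
  rcases ite_eq_iff.mp hi with ⟨hle, hi⟩ | ⟨hlt, hi⟩
  · rw [h.payoff_eq_zero hi] at hle ⊢
    exact max_eq_left hle
  · linarith [h.payoff_nonneg i, h'.payoff_eq_zero hi, not_le.mp hlt]

theorem min_price_eq_zero_of_unmatched_meet (h : IsEquilib M p w μ)
    (h' : IsEquilib M p' w' μ') (hj : ∀ i, (if w' i ≤ w i then μ i else μ' i) ≠ some j) :
    min (p j) (p' j) = 0 := by
  obtain ⟨hμ', hμ⟩ := image_filter_payoff_lt h h'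
  rcases lt_or_ge (p' j) (p j) with hlt | hle
  · obtain ⟨i, hi, hij⟩ := mem_image.mp <|
      hμ' ▸ mem_image_of_mem some (mem_filter.mpr ⟨mem_univ j, hlt⟩)
    exact absurd (by rw [if_neg (not_le.mpr (mem_filter.mp hi).2), hij]) (hj i)
  · rw [min_eq_left hle]
    refine h.price_eq_zero fun i hij => ?_
    by_cases hle_i : w' i ≤ w i
    · exact hj i (by rw [if_pos hle_i, hij])
    · have hjS : μ i ∈ (univ.filter fun j => p' j < p j).image some :=
        hμ ▸ mem_image_of_mem μ (mem_filter.mpr ⟨mem_univ i, not_le.mp hle_i⟩)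
      simp only [hij, mem_image, mem_filter, mem_univ, true_and, Option.some_inj,
        exists_eq_right] at hjS
      exact hle.not_gt hjS

end IsEquilib

/-- The pointwise minimum of prices and pointwise maximum of payoffs of two
competitive equilibria, with the indicated supporting matching, is again a
competitive equilibrium. -/
theorem lattice_inf {I J : Type} [Fintype I] [Fintype J] (M : Market I J)
    (p p' : J → ℝ) (w w' : I → ℝ) (μ μ' : I → Option J)
    (h : IsEquilib M p w μ) (h' : IsEquilib M p' w' μ') :
    IsEquilib M (fun j => min (p j) (p' j)) (fun i => max (w i) (w' i))
      (fun i => if w' i ≤ w i then μ i else μ' i) :=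
  ⟨fun _ _ _ => h.eq_of_matched_meet h',
    fun j => le_min (h.price_nonneg j) (h'.price_nonneg j),
    fun i => (h.payoff_nonneg i).trans (le_max_left _ _),
    fun _ _ => h.max_payoff_eq_of_matched_meet h',
    h.utility_min_le_max_payoff h',
    fun _ => h.max_payoff_eq_zero_of_meet_eq_none h',
    fun _ => h.min_price_eq_zero_of_unmatched_meet h'⟩
end

section
/- Every unit-demand market M = (I, J, {u_i^j}) with continuous, strictly decreasing utility functions that are eventually non-positive admits a competitive equilibrium. -/
attribute [local instance] Classical.propDecidable

/-! A discrete ascending auction with price increment `ε` (an unmatched buyer bids one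
increment above the current price of her favourite good and displaces its holder) stops,
since prices are bounded and every bid raises one of them, at an `ε`-equilibrium: every
buyer does at least as well as with any good whose price is raised by `ε`. Along `ε → 0`
some matching recurs infinitely often and the bounded prices have a convergent subsequence;
all conditions of an `ε`-equilibrium are closed, and in the limit they become those of a
competitive equilibrium. -/

open Filter Topology

variable {I J : Type} [Fintype I] [Fintype J] {M : Market I J}

lemma Market.exists_nonpos_bound (M : Market I J) : ∃ B, 0 ≤ B ∧ ∀ i j, M.u i j B ≤ 0 := by
  choose x hx using M.evNonpos
  obtain ⟨b, hb⟩ := (Set.finite_range fun q : I × J => x q.1 q.2).bddAbove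
  exact ⟨max b 0, le_max_right _ _, fun i j =>
    hx i j _ ((hb ⟨(i, j), rfl⟩).trans (le_max_left _ _))⟩

structure IsApproxEquilib (M : Market I J) (ε : ℝ) (p : J → ℝ) (w : I → ℝ)
    (μ : I → Option J) : Prop where
  inj : ∀ i i' j, μ i = some j → μ i' = some j → i = i'
  price_nonneg : ∀ j, 0 ≤ p j
  payoff_nonneg : ∀ i, 0 ≤ w i
  payoff_eq : ∀ i j, μ i = some j → w i = M.u i j (p j)
  optimal : ∀ i j, M.u i j (p j + ε) ≤ w i
  payoff_unmatched : ∀ i, μ i = none → w i = 0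
  price_unsold : ∀ j, (∀ i, μ i ≠ some j) → p j = 0

namespace IsApproxEquilib

variable {ε B : ℝ} {p : J → ℝ} {w : I → ℝ} {μ : I → Option J}

lemma price_le (h : IsApproxEquilib M ε p w μ) (hB0 : 0 ≤ B) (hB : ∀ i j, M.u i j B ≤ 0)
    (j : J) : p j ≤ B := by
  by_cases hsold : ∃ i, μ i = some j
  · obtain ⟨i, hi⟩ := hsold
    have hw : 0 ≤ M.u i j (p j) := h.payoff_eq i j hi ▸ h.payoff_nonneg i
    exact (M.anti i j).le_iff_ge.mp (hB i j |>.trans hw)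
  · simp only [not_exists] at hsold
    exact h.price_unsold j hsold ▸ hB0

lemma isEquilib_of_tendsto {α : Type*} {l : Filter α} [l.NeBot] {ε : α → ℝ} {p : α → J → ℝ}
    {w : α → I → ℝ} {p₀ : J → ℝ} {w₀ : I → ℝ} (h : ∀ a, IsApproxEquilib M (ε a) (p a) (w a) μ)
    (hε : Tendsto ε l (𝓝 0)) (hp : Tendsto p l (𝓝 p₀)) (hw : Tendsto w l (𝓝 w₀)) :
    IsEquilib M p₀ w₀ μ := by
  obtain ⟨a⟩ := l.nonempty_of_neBot
  rw [tendsto_pi_nhds] at hp hw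
  have hu : ∀ i j, Tendsto (fun a => M.u i j (p a j)) l (𝓝 (M.u i j (p₀ j))) :=
    fun i j => ((M.cont i j).tendsto _).comp (hp j)
  refine ⟨(h a).inj, fun j => ge_of_tendsto' (hp j) fun a => (h a).price_nonneg j,
    fun i => ge_of_tendsto' (hw i) fun a => (h a).payoff_nonneg i, fun i j hij => ?_,
    fun i j => ?_, fun i hi => ?_, fun j hj => ?_⟩
  · exact tendsto_nhds_unique (hw i) ((hu i j).congr fun a => ((h a).payoff_eq i j hij).symm)
  · have hshift : Tendsto (fun a => p a j + ε a) l (𝓝 (p₀ j)) := by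
      simpa using (hp j).add hε
    exact le_of_tendsto_of_tendsto' (((M.cont i j).tendsto _).comp hshift) (hw i)
      fun a => (h a).optimal i j
  · exact tendsto_nhds_unique (hw i) (tendsto_const_nhds.congr fun a =>
      ((h a).payoff_unmatched i hi).symm)
  · exact tendsto_nhds_unique (hp j) (tendsto_const_nhds.congr fun a =>
      ((h a).price_unsold j hj).symm)

end IsApproxEquilib

lemma exists_isEquilib_of_isApproxEquilib {ε : ℕ → ℝ} (hε : Tendsto ε atTop (𝓝 0)) {B : ℝ}
    (hB0 : 0 ≤ B) (hB : ∀ i j, M.u i j B ≤ 0)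
    (happrox : ∀ k, ∃ p w μ, IsApproxEquilib M (ε k) p w μ) :
    ∃ p w μ, IsEquilib M p w μ := by
  choose p w μ h using happrox
  obtain ⟨μ₀, hμ₀⟩ : ∃ μ₀, ∃ᶠ k in atTop, μ k = μ₀ :=
    frequently_exists.mp (Frequently.of_forall fun k => ⟨μ k, rfl⟩)
  obtain ⟨ψ, hψ, hψμ⟩ := extraction_of_frequently_atTop hμ₀
  obtain ⟨p₀, -, φ, hφ, hp⟩ := (isCompact_univ_pi fun _ : J => isCompact_Icc).tendsto_subseq
    fun t => Set.mem_univ_pi.mpr fun j => ⟨(h (ψ t)).price_nonneg j, (h (ψ t)).price_le hB0 hB j⟩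
  have h' : ∀ t, IsApproxEquilib M (ε (ψ (φ t))) (p (ψ (φ t))) (w (ψ (φ t))) μ₀ :=
    fun t => hψμ (φ t) ▸ h _
  -- A payoff is pinned down by the matching and the prices, so it converges with them.
  have hw : ∀ i, ∃ w₀, Tendsto (fun t => w (ψ (φ t)) i) atTop (𝓝 w₀) := by
    intro i
    cases hi : μ₀ i with
    | none => exact ⟨0, tendsto_const_nhds.congr fun t => ((h' t).payoff_unmatched i hi).symm⟩
    | some j =>
      exact ⟨_, (((M.cont i j).tendsto _).comp (tendsto_pi_nhds.mp hp j)).congr fun t =>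
        ((h' t).payoff_eq i j hi).symm⟩
  choose w₀ hw using hw
  exact ⟨p₀, w₀, μ₀, IsApproxEquilib.isEquilib_of_tendsto h'
    (hε.comp (hψ.comp hφ).tendsto_atTop) hp (tendsto_pi_nhds.mpr hw)⟩

noncomputable def reassign {α β : Type*} (μ : α → Option β) (a₀ : α) (b₀ : β) : α → Option β :=
  fun a => if a = a₀ then some b₀ else if μ a = some b₀ then none else μ a

lemma reassign_eq_some {α β : Type*} {μ : α → Option β} {a₀ a : α} {b₀ b : β} :
    reassign μ a₀ b₀ a = some b ↔ a = a₀ ∧ b = b₀ ∨ a ≠ a₀ ∧ b ≠ b₀ ∧ μ a = some b := by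
  unfold reassign
  split_ifs <;> aesop

/-- State of the ascending auction with increment `ε`: good `j` costs `ε * n j`. -/
structure AuctionState (M : Market I J) (ε : ℝ) (μ : I → Option J) (n : J → ℕ) : Prop where
  inj : ∀ i i' j, μ i = some j → μ i' = some j → i = i'
  count_unsold : ∀ j, (∀ i, μ i ≠ some j) → n j = 0
  pos : ∀ i j, μ i = some j → 0 < M.u i j (ε * n j)
  envy_free : ∀ i j j', μ i = some j → M.u i j' (ε * n j' + ε) ≤ M.u i j (ε * n j)

namespace AuctionState

variable {ε : ℝ} {μ : I → Option J} {n : J → ℕ}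

lemma init : AuctionState M ε (fun _ => none) (fun _ => 0) where
  inj := by simp
  count_unsold := by simp
  pos := by simp
  envy_free := by simp

lemma bid (hs : AuctionState M ε μ n) (hε : 0 ≤ ε) {i₀ : I} {j₀ : J} (hi₀ : μ i₀ = none)
    (hpos : 0 < M.u i₀ j₀ (ε * n j₀ + ε))
    (hmax : ∀ j, M.u i₀ j (ε * n j + ε) ≤ M.u i₀ j₀ (ε * n j₀ + ε)) :
    AuctionState M ε (reassign μ i₀ j₀) (Function.update n j₀ (n j₀ + 1)) := by
  set n' := Function.update n j₀ (n j₀ + 1)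
  have hn'₀ : ε * (n' j₀ : ℝ) = ε * n j₀ + ε := by simp [n', mul_add]
  have hn' : ∀ j, j ≠ j₀ → n' j = n j := fun j hj => Function.update_of_ne hj _ _
  have hrise : ∀ i j, M.u i j (ε * n' j + ε) ≤ M.u i j (ε * n j + ε) := by
    intro i j
    have hle : n j ≤ n' j := le_update_self_iff.mpr (Nat.le_succ _) j
    exact (M.anti i j).antitone (by gcongr)
  refine ⟨fun i i' j h h' => ?_, fun j hj => ?_, fun i j h => ?_, fun i j j' h => ?_⟩
  · rw [reassign_eq_some] at h h'
    rcases h with ⟨rfl, hj⟩ | ⟨-, hj, h⟩ <;> rcases h' with ⟨rfl, hj'⟩ | ⟨-, hj', h'⟩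
    exacts [rfl, (hj' hj).elim, (hj hj').elim, hs.inj i i' j h h']
  · have hj₀ : j ≠ j₀ := by
      rintro rfl
      exact hj i₀ (reassign_eq_some.mpr (Or.inl ⟨rfl, rfl⟩))
    refine (hn' j hj₀).trans (hs.count_unsold j fun i hi => hj i (reassign_eq_some.mpr ?_))
    exact Or.inr ⟨by rintro rfl; simp [hi₀] at hi, hj₀, hi⟩
  · rcases reassign_eq_some.mp h with ⟨rfl, rfl⟩ | ⟨-, hj, h⟩
    · rwa [hn'₀]
    · rw [hn' j hj]
      exact hs.pos i j h
  · rcases reassign_eq_some.mp h with ⟨rfl, rfl⟩ | ⟨-, hj, h⟩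
    · rw [hn'₀]
      exact (hrise _ j').trans (hmax j')
    · rw [hn' j hj]
      exact (hrise i j').trans (hs.envy_free i j j' h)

lemma count_le (hs : AuctionState M ε μ n) (hε : 0 < ε) {B : ℝ} (hB : ∀ i j, M.u i j B ≤ 0)
    (j : J) : n j ≤ ⌈B / ε⌉₊ := by
  by_cases hsold : ∃ i, μ i = some j
  · obtain ⟨i, hi⟩ := hsold
    have hlt : ε * n j < B := (M.anti i j).lt_iff_gt.mp ((hB i j).trans_lt (hs.pos i j hi))
    have hle : (n j : ℝ) ≤ B / ε := (le_div_iff₀ hε).mpr (by linarith)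
    exact_mod_cast hle.trans (Nat.le_ceil _)
  · simp only [not_exists] at hsold
    simp [hs.count_unsold j hsold]

lemma isApproxEquilib (hs : AuctionState M ε μ n) (hε : 0 ≤ ε)
    (hstable : ∀ i, μ i = none → ∀ j, M.u i j (ε * n j + ε) ≤ 0) :
    ∃ w, IsApproxEquilib M ε (fun j => ε * n j) w μ := by
  refine ⟨fun i => (μ i).elim 0 fun j => M.u i j (ε * n j), hs.inj,
    fun j => mul_nonneg hε (Nat.cast_nonneg _), fun i => ?_, fun i j h => by simp [h],
    fun i j => ?_, fun i h => by simp [h], fun j hj => by simp [hs.count_unsold j hj]⟩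
  · cases h : μ i with
    | none => simp
    | some j => simpa using (hs.pos i j h).le
  · cases h : μ i with
    | none => simpa using hstable i h j
    | some j' => simpa using hs.envy_free i j' j h

lemma finite_setOf (hε : 0 < ε) {B : ℝ} (hB : ∀ i j, M.u i j B ≤ 0) :
    {s : (I → Option J) × (J → ℕ) | AuctionState M ε s.1 s.2}.Finite :=
  (Set.finite_univ.prod (Set.Finite.pi fun _ => Set.finite_Iic ⌈B / ε⌉₊)).subset
    fun _ hs => ⟨trivial, fun j _ => hs.count_le hε hB j⟩

end AuctionState

lemma exists_isApproxEquilib {ε : ℝ} (hε : 0 < ε) {B : ℝ} (hB : ∀ i j, M.u i j B ≤ 0) :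
    ∃ p w μ, IsApproxEquilib M ε p w μ := by
  obtain ⟨⟨μ, n⟩, hs, hmax⟩ := Set.exists_max_image _ (fun s => ∑ j, s.2 j)
    (AuctionState.finite_setOf hε hB) ⟨(fun _ => none, fun _ => 0), AuctionState.init⟩
  -- Otherwise a bid would lead to an auction state with a larger total count.
  have hstable : ∀ i, μ i = none → ∀ j, M.u i j (ε * n j + ε) ≤ 0 := by
    intro i hi j
    by_contra! hj
    obtain ⟨j₀, -, hj₀⟩ := Finset.univ.exists_max_image (fun j => M.u i j (ε * n j + ε))
      ⟨j, Finset.mem_univ _⟩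
    have hbid := hs.bid hε.le hi (hj.trans_le (hj₀ j (Finset.mem_univ _)))
      fun j => hj₀ j (Finset.mem_univ _)
    exact (hmax (_, Function.update n j₀ (n j₀ + 1)) hbid).not_gt
      (Fintype.sum_strictMono (lt_update_self_iff.mpr (Nat.lt_succ_self _)))
  obtain ⟨w, hw⟩ := hs.isApproxEquilib hε.le hstable
  exact ⟨_, w, μ, hw⟩

/-- Every unit-demand market admits a competitive equilibrium. -/
theorem equilibrium_exists {I J : Type} [Fintype I] [Fintype J] (M : Market I J) :
    ∃ (p : J → ℝ) (w : I → ℝ) (μ : I → Option J), IsEquilib M p w μ := by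
  obtain ⟨B, hB0, hB⟩ := M.exists_nonpos_bound
  exact exists_isEquilib_of_isApproxEquilib tendsto_one_div_add_atTop_nhds_zero_nat hB0 hB
    fun _ => exists_isApproxEquilib Nat.one_div_pos_of_nat hB
end

section
/- (Two-sided reduction) Given a two-sided market M = (I, J, {u_i^j}, {q_i^j}) where matched pair (i, j) with transfer x gives i utility u_i^j(x) and j utility q_i^j(−x), define the buyer/good market M' = (I, J, {u'_i^j}) with u'_i^j(y) = u_i^j(−(q_i^j)^{-1}(y)). Then every competitive equilibrium of M' (with good 'prices' interpreted as agents-J payoffs) corresponds to a competitive equilibrium of M with the same payoffs for all agents, and conversely. -/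
attribute [local instance] Classical.propDecidable

/-- A two-sided matching market: agents `I` and `J`; if `i` and `j` are matched
with transfer `x` from `i` to `j`, agent `i` gets utility `u i j x` and agent
`j` gets utility `q i j (-x)`. -/
structure TwoMarket (I J : Type) [Fintype I] [Fintype J] where
  u : I → J → ℝ → ℝ
  q : I → J → ℝ → ℝ
  u_cont : ∀ i j, Continuous (u i j)
  u_anti : ∀ i j, StrictAnti (u i j)
  u_surj : ∀ i j, Function.Surjective (u i j)
  u_evNonpos : ∀ i j, ∃ x : ℝ, ∀ y ≥ x, u i j y ≤ 0
  q_cont : ∀ i j, Continuous (q i j)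
  q_anti : ∀ i j, StrictAnti (q i j)
  q_surj : ∀ i j, Function.Surjective (q i j)
  q_evNonpos : ∀ i j, ∃ x : ℝ, ∀ y ≥ x, q i j y ≤ 0

/-- A competitive equilibrium of a two-sided market: a partial matching `μ`
with transfers `x`, payoff vectors `uI`, `uJ`; payoffs of matched pairs are
realized by the transfer, payoffs are nonnegative, unmatched agents get `0`,
and no pair `(i, j)` can both strictly improve with some transfer `t`. -/
def IsTwoCE {I J : Type} [Fintype I] [Fintype J] (T : TwoMarket I J)
    (μ : I → Option J) (x : I → ℝ) (uI : I → ℝ) (uJ : J → ℝ) : Prop :=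
  (∀ i i' j, μ i = some j → μ i' = some j → i = i') ∧
  (∀ i, 0 ≤ uI i) ∧ (∀ j, 0 ≤ uJ j) ∧
  (∀ i j, μ i = some j → uI i = T.u i j (x i) ∧ uJ j = T.q i j (-(x i))) ∧
  (∀ i, μ i = none → uI i = 0) ∧
  (∀ j, (∀ i, μ i ≠ some j) → uJ j = 0) ∧
  (∀ i j t, T.u i j t ≤ uI i ∨ T.q i j (-t) ≤ uJ j)

/-!
Substituting `y = q_i^j(-x)` turns a transfer between `i` and `j` into a price of `j` in `M'`, with
`u'_i^j(y) = u_i^j(x)`. A pair `(i, j)` can block with some transfer exactly when `i` strictly prefers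
`j` at the price equal to `j`'s payoff; so the no-blocking condition of `M` is the best-response
condition of `M'`, and all other clauses of the two notions of equilibrium coincide.
-/

section PairwiseStability

variable {u q v : ℝ → ℝ} {a b : ℝ}

theorem forall_le_or_le_of_le (hv : Antitone v) (hvqu : ∀ x, v (q (-x)) = u x) (hab : v b ≤ a) :
    ∀ t, u t ≤ a ∨ q (-t) ≤ b := by
  intro t
  refine (le_or_gt (q (-t)) b).symm.imp_left fun hbq => ?_
  calc u t = v (q (-t)) := (hvqu t).symm
    _ ≤ v b := hv hbq.le
    _ ≤ a := hab

theorem le_of_forall_le_or_le (hv : StrictAnti v) (hv_surj : Function.Surjective v)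
    (hq_surj : Function.Surjective q) (hvqu : ∀ x, v (q (-x)) = u x)
    (hblock : ∀ t, u t ≤ a ∨ q (-t) ≤ b) : v b ≤ a := by
  by_contra! hlt
  -- a point `y > b` with `v y > a`; the transfer `-s`, where `q s = y`, then violates `hblock`
  obtain ⟨y, hy⟩ := hv_surj ((a + v b) / 2)
  have hby : b < y := hv.lt_iff_gt.mp (by linarith)
  obtain ⟨s, hs⟩ := hq_surj y
  have hu : u (-s) = v y := by rw [← hvqu, neg_neg, hs]
  rcases hblock (-s) with h | h
  · linarith
  · rw [neg_neg, hs] at h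
    linarith

end PairwiseStability

/-- Two-sided reduction: let `M'` be the buyer/good market whose utilities
satisfy `u'_i^j(q_i^j(-x)) = u_i^j(x)` (i.e. `u'_i^j = u_i^j ∘ (-(q_i^j)⁻¹)`).
Then every competitive equilibrium of `M'` — with prices interpreted as the
payoffs of the agents in `J` — yields a competitive equilibrium of the
two-sided market `T` with the same payoffs, and conversely. -/
theorem two_sided_reduction {I J : Type} [Fintype I] [Fintype J]
    (T : TwoMarket I J) (M' : Market I J)
    (hM' : ∀ i j x, M'.u i j (T.q i j (-x)) = T.u i j x) :
    (∀ (pJ : J → ℝ) (uI : I → ℝ) (μ : I → Option J), IsEquilib M' pJ uI μ →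
      ∃ x : I → ℝ, IsTwoCE T μ x uI pJ) ∧
    (∀ (μ : I → Option J) (x : I → ℝ) (uI : I → ℝ) (uJ : J → ℝ),
      IsTwoCE T μ x uI uJ → IsEquilib M' uJ uI μ) := by
  constructor
  · rintro pJ uI μ ⟨hinj, hp0, hw0, hmatch, hbest, hnone, hjnone⟩
    choose s hs using fun i j => T.q_surj i j (pJ j)
    refine ⟨fun i => (μ i).elim 0 fun j => -s i j, hinj, hw0, hp0, fun i j hij => ?_, hnone,
      hjnone, fun i j => forall_le_or_le_of_le (M'.anti i j).antitone (hM' i j) (hbest i j)⟩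
    simp only [hij, Option.elim_some, neg_neg, hs, ← hM', hmatch i j hij, and_self]
  · rintro μ x uI uJ ⟨hinj, hI0, hJ0, hmatch, hnone, hjnone, hblock⟩
    refine ⟨hinj, hJ0, hI0, fun i j hij => ?_, fun i j => le_of_forall_le_or_le (M'.anti i j)
      (M'.surj i j) (T.q_surj i j) (hM' i j) (hblock i j), hnone, hjnone⟩
    obtain ⟨hu, hq⟩ := hmatch i j hij
    rw [hu, hq, hM']
end
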